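/- Restriction of complete solutions to local-strategy solutions: Let φ be an LTL formula over V with decomposition ⟨φ_1,…,φ_n⟩, and let S and G be vectors of strategies and guarantee transition systems for the system processes. If (S,G) is a solution of certifying synthesis with local satisfaction for φ and prop(φ_i) ⊆ V_i holds for all system processes p_i, then (S',G) is a solution of certifying synthesis with local strategies for φ, where S' = ⟨s'_1,…,s'_n⟩ with s'_i the restriction of s_i w.r.t. G. -/

import Mathlib

namespace CertSynth

/-- Syntax of LTL formulas over atomic propositions `V`. -/
inductive LTL (V : Type) : Type
  | atom : V → LTL V
  | neg : LTL V → LTL V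
  | disj : LTL V → LTL V → LTL V
  | conj : LTL V → LTL V → LTL V
  | next : LTL V → LTL V
  | untl : LTL V → LTL V → LTL V

namespace LTL

variable {V : Type}

/-- Standard semantics of LTL over infinite words in `(2^V)^ω`. -/
def sat : (ℕ → Set V) → LTL V → Prop
  | σ, atom a => a ∈ σ 0
  | σ, neg φ => ¬ sat σ φ
  | σ, disj φ ψ => sat σ φ ∨ sat σ ψ
  | σ, conj φ ψ => sat σ φ ∧ sat σ ψ
  | σ, next φ => sat (fun k => σ (k + 1)) φ
  | σ, untl φ ψ => ∃ t, sat (fun k => σ (k + t)) ψ ∧ ∀ u < t, sat (fun k => σ (k + u)) φ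

/-- The atomic propositions occurring in a formula. -/
def props : LTL V → Set V
  | atom a => {a}
  | neg φ => props φ
  | disj φ ψ => props φ ∪ props ψ
  | conj φ ψ => props φ ∪ props ψ
  | next φ => props φ
  | untl φ ψ => props φ ∪ props ψ

end LTL

/-- A Moore transition system over inputs `I` and outputs `O`: a finite state set,
an initial state, a (total) transition function reading letters in `2^I` and a
labeling function producing letters in `2^O`. -/
structure Moore (V : Type) (I O : Set V) where
  S : Type
  finS : Finite S
  init : S
  trans : S → Set V → S
  label : S → Set V
  label_sub : ∀ t, label t ⊆ O

namespace Moore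

variable {V : Type} {I O : Set V}

/-- The run of a Moore transition system on an input sequence. -/
def run (m : Moore V I O) (γ : ℕ → Set V) : ℕ → m.S
  | 0 => m.init
  | k + 1 => m.trans (run m γ k) (γ k ∩ I)

/-- The computation `comp(m,γ)` of `m` on the input sequence `γ`: its `k`-th letter
is the `k`-th input letter joined with the label of the `k`-th state of the run. -/
def comp (m : Moore V I O) (γ : ℕ → Set V) (k : ℕ) : Set V :=
  (γ k ∩ I) ∪ m.label (m.run γ k)

end Moore

/-- Simulation `T₂ ≼_{O₁} T₁` of Moore transition systems over the same inputs `I`. -/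
def Sim {V : Type} {I O₁ O₂ : Set V} (T₂ : Moore V I O₂) (T₁ : Moore V I O₁) : Prop :=
  ∃ R : T₂.S → T₁.S → Prop,
    R T₂.init T₁.init ∧
    (∀ t₂ t₁, R t₂ t₁ → T₂.label t₂ ∩ O₁ = T₁.label t₁) ∧
    (∀ t₂ t₁ a, a ⊆ I → R t₂ t₁ → R (T₂.trans t₂ a) (T₁.trans t₁ a))

/-- A Moore transition system with a partial transition function. -/
structure PMoore (V : Type) (I O : Set V) where
  S : Type
  finS : Finite S
  init : S
  trans : S → Set V → Option S
  label : S → Set V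
  label_sub : ∀ t, label t ⊆ O

namespace PMoore

variable {V : Type} {I O : Set V}

/-- The (partial) run of a partial Moore transition system on an input sequence. -/
def prun (m : PMoore V I O) (γ : ℕ → Set V) : ℕ → Option m.S
  | 0 => some m.init
  | k + 1 => (prun m γ k).bind fun st => m.trans st (γ k ∩ I)

/-- The computation of `m` on `γ` is infinite. -/
def Inf (m : PMoore V I O) (γ : ℕ → Set V) : Prop := ∀ k, (m.prun γ k).isSome

/-- The computation of `m` on `γ` (defaulting to the input letter after the
computation has ended). -/
def compD (m : PMoore V I O) (γ : ℕ → Set V) (k : ℕ) : Set V :=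
  (γ k ∩ I) ∪ (match m.prun γ k with | some st => m.label st | none => ∅)

/-- The finite or infinite word `comp(m,γ) ∪ γ'`. -/
def pcomp (m : PMoore V I O) (γ γ' : ℕ → Set V) (k : ℕ) : Option (Set V) :=
  (m.prun γ k).map fun st => (γ k ∩ I) ∪ m.label st ∪ γ' k

end PMoore

/-- Simulation of a partial Moore transition system by a complete one. -/
def PSim {V : Type} {I O₁ O₂ : Set V} (T₂ : PMoore V I O₂) (T₁ : Moore V I O₁) : Prop :=
  ∃ R : T₂.S → T₁.S → Prop,
    R T₂.init T₁.init ∧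
    (∀ t₂ t₁, R t₂ t₁ → T₂.label t₂ ∩ O₁ = T₁.label t₁) ∧
    (∀ t₂ t₁ a, a ⊆ I → R t₂ t₁ → ∀ t₂', T₂.trans t₂ a = some t₂' → R t₂' (T₁.trans t₁ a))

/-- A distributed architecture with `n ≥ 2` system processes over the finite set `V`
of variables: input and output variables for every system process, output variables
of the environment, with the required disjointness conditions, `V = ⋃ᵢ Vᵢ`, and
`inp ∖ out = O_env`. -/
structure Arch (V : Type) (n : ℕ) where
  I : Fin n → Set V
  O : Fin n → Set V
  Oenv : Set V
  two_le : 2 ≤ n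
  disj_IO : ∀ i, Disjoint (I i) (O i)
  disj_O : ∀ i j, i ≠ j → Disjoint (O i) (O j)
  disj_Oenv : ∀ i, Disjoint Oenv (O i)
  cover : ∀ v : V, ∃ i, v ∈ I i ∪ O i
  env_eq : (⋃ i, I i) \ (⋃ i, O i) = Oenv

namespace Arch

variable {V : Type} {n : ℕ}

/-- The variables `Vᵢ = Iᵢ ∪ Oᵢ` of process `i`. -/
def Vars (A : Arch V n) (i : Fin n) : Set V := A.I i ∪ A.O i

/-- `inp`, the union of the inputs of all system processes. -/
def inp (A : Arch V n) : Set V := ⋃ i, A.I i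

/-- `out`, the union of the outputs of all system processes. -/
def out (A : Arch V n) : Set V := ⋃ i, A.O i

/-- The guarantee output variables `OGᵢ = Oᵢ ∩ inp` of process `i`. -/
def Og (A : Arch V n) (i : Fin n) : Set V := A.O i ∩ A.inp

end Arch

section Defs

variable {V : Type} {n : ℕ}

/-- A strategy for system process `i`: a Moore TS over `Iᵢ` and `Oᵢ`. -/
abbrev Strategy (A : Arch V n) (i : Fin n) := Moore V (A.I i) (A.O i)

/-- A guarantee transition system (GTS) for process `i`: a Moore TS over `Iᵢ` and `OGᵢ`. -/
abbrev GTS (A : Arch V n) (i : Fin n) := Moore V (A.I i) (A.Og i)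

/-- A (candidate) local strategy for process `i`: a partial Moore TS over `Iᵢ` and `Oᵢ`. -/
abbrev LocalStrategy (A : Arch V n) (i : Fin n) := PMoore V (A.I i) (A.O i)

/-- The parallel composition `s₁ ∥ … ∥ sₙ`: product state space, componentwise
transitions where each component receives the environment inputs together with the
outputs of the other components, and the union of the labelings as labels. -/
def par (A : Arch V n) (s : ∀ i, Strategy A i) : Moore V A.Oenv A.out where
  S := ∀ i, (s i).S
  finS := by
    haveI : ∀ i, Finite ((s i).S) := fun i => (s i).finS
    infer_instance
  init := fun i => (s i).init
  trans := fun st a i => (s i).trans (st i) ((a ∪ ⋃ j, (s j).label (st j)) ∩ A.I i)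
  label := fun st => ⋃ i, (s i).label (st i)
  label_sub := fun st => Set.iUnion_mono fun i => (s i).label_sub (st i)

open Classical in
/-- The parallel composition of partial Moore transition systems. -/
noncomputable def pPar (A : Arch V n) (s : ∀ i, LocalStrategy A i) :
    PMoore V A.Oenv A.out where
  S := ∀ i, (s i).S
  finS := by
    haveI : ∀ i, Finite ((s i).S) := fun i => (s i).finS
    infer_instance
  init := fun i => (s i).init
  trans := fun st a =>
    if h : ∀ i, ((s i).trans (st i) ((a ∪ ⋃ j, (s j).label (st j)) ∩ A.I i)).isSome then
      some fun i => ((s i).trans (st i) ((a ∪ ⋃ j, (s j).label (st j)) ∩ A.I i)).get (h i)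
    else none
  label := fun st => ⋃ i, (s i).label (st i)
  label_sub := fun st => Set.iUnion_mono fun i => (s i).label_sub (st i)

/-- `σ ⊨ Φ` for a specification `Φ = ξ₁ ∧ … ∧ ξₖ` given by its list of conjuncts. -/
def satSpec (Φ : List (LTL V)) (σ : ℕ → Set V) : Prop := ∀ ξ ∈ Φ, LTL.sat σ ξ

/-- `ξ` is a conjunct of the subspecification `φᵢ` of the decomposition of `Φ`:
it is a conjunct of `Φ` that mentions an output of `pᵢ` or no output at all. -/
def inDecomp (A : Arch V n) (Φ : List (LTL V)) (i : Fin n) (ξ : LTL V) : Prop :=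
  ξ ∈ Φ ∧ ((ξ.props ∩ A.O i).Nonempty ∨ ξ.props ∩ A.out = ∅)

/-- `σ ⊨ φᵢ`, where `φᵢ` is the `i`-th subspecification of the decomposition of `Φ`. -/
def satDecomp (A : Arch V n) (Φ : List (LTL V)) (i : Fin n) (σ : ℕ → Set V) : Prop :=
  ∀ ξ, inDecomp A Φ i ξ → LTL.sat σ ξ

/-- The atomic propositions `prop(φᵢ)` of the `i`-th subspecification. -/
def propsDecomp (A : Arch V n) (Φ : List (LTL V)) (i : Fin n) : Set V :=
  {v | ∃ ξ, inDecomp A Φ i ξ ∧ v ∈ ξ.props}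

/-- The relevant processes `Rᵢ = { pⱼ | j ≠ i, Oⱼ ∩ prop(φᵢ) ≠ ∅ }` of process `i`. -/
def Rel (A : Arch V n) (Φ : List (LTL V)) (i : Fin n) : Set (Fin n) :=
  {j | j ≠ i ∧ (A.O j ∩ propsDecomp A Φ i).Nonempty}

/-- The word `comp(sᵢ,γ) ∪ γ'`. -/
def cword (A : Arch V n) {i : Fin n} (s : Strategy A i) (γ γ' : ℕ → Set V) : ℕ → Set V :=
  fun k => s.comp γ k ∪ γ' k

/-- `sᵢ ⊨ ψ`: every computation of `sᵢ`, joined with arbitrary valuations of the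
variables outside `Vᵢ`, satisfies `ψ`. -/
def StratSat (A : Arch V n) {i : Fin n} (s : Strategy A i) (ψ : LTL V) : Prop :=
  ∀ γ γ' : ℕ → Set V, (∀ k, γ k ⊆ A.I i) → (∀ k, γ' k ⊆ (A.Vars i)ᶜ) →
    LTL.sat (cword A s γ γ') ψ

/-- `(S,Ψ)` is a solution of certifying synthesis with LTL certificates for `Φ`,
where process `i` uses the certificates of the processes in `J i`:
`sᵢ ⊨ ψᵢ ∧ (⋀_{j ∈ J i} ψⱼ → φᵢ)` for every system process `i`. -/
def CertSolLTLWith (A : Arch V n) (Φ : List (LTL V)) (s : ∀ i, Strategy A i)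
    (ψ : Fin n → LTL V) (J : Fin n → Set (Fin n)) : Prop :=
  ∀ i, ∀ γ γ' : ℕ → Set V, (∀ k, γ k ⊆ A.I i) → (∀ k, γ' k ⊆ (A.Vars i)ᶜ) →
    LTL.sat (cword A (s i) γ γ') (ψ i) ∧
      ((∀ j ∈ J i, LTL.sat (cword A (s i) γ γ') (ψ j)) →
        satDecomp A Φ i (cword A (s i) γ γ'))

/-- `(S,Ψ)` is a solution of certifying synthesis with LTL certificates for `Φ`. -/
def CertSolLTL (A : Arch V n) (Φ : List (LTL V)) (s : ∀ i, Strategy A i)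
    (ψ : Fin n → LTL V) : Prop :=
  CertSolLTLWith A Φ s ψ (fun i => {j | j ≠ i})

/-- `(S,Ψ)_R` is a solution of certifying synthesis with relevant processes for `Φ`. -/
def CertSolLTLR (A : Arch V n) (Φ : List (LTL V)) (s : ∀ i, Strategy A i)
    (ψ : Fin n → LTL V) : Prop :=
  CertSolLTLWith A Φ s ψ (fun i => Rel A Φ i)

/-- The first `t` letters of `σ` form a valid history w.r.t. the GTSs `{g j | j ∈ J}`:
for every `j ∈ J`, every position `k < t` and every infinite extension of the
length-`t` prefix of `σ`, the letters agree on `OGⱼ` with the computation of `g j`. -/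
def ValidHist (A : Arch V n) (g : ∀ j, GTS A j) (J : Set (Fin n)) (t : ℕ)
    (σ : ℕ → Set V) : Prop :=
  ∀ j ∈ J, ∀ k < t, ∀ σh : ℕ → Set V, (∀ l < t, σh l = σ l) →
    σ k ∩ A.Og j = (g j).comp σh k ∩ A.Og j

/-- `sᵢ` locally satisfies `φᵢ` w.r.t. the GTSs of the processes in `J`. -/
def LocalSat (A : Arch V n) (Φ : List (LTL V)) {i : Fin n} (s : Strategy A i)
    (g : ∀ j, GTS A j) (J : Set (Fin n)) : Prop :=
  ∀ γ γ' : ℕ → Set V, (∀ k, γ k ⊆ A.I i) → (∀ k, γ' k ⊆ (A.Vars i)ᶜ) →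
    (∀ t, ValidHist A g J t (cword A s γ γ')) →
    satDecomp A Φ i (cword A s γ γ')

/-- `(S,G)` is a solution of certifying synthesis with guarantee transition systems,
where process `i` uses the guarantees of the processes in `J i`. -/
def CertSolGTSWith (A : Arch V n) (Φ : List (LTL V)) (s : ∀ i, Strategy A i)
    (g : ∀ i, GTS A i) (J : Fin n → Set (Fin n)) : Prop :=
  ∀ i, Sim (s i) (g i) ∧ LocalSat A Φ (s i) g (J i)

/-- `(S,G)` is a solution of certifying synthesis with guarantee transition systems
(equivalently, with local satisfaction) for `Φ`. -/
def CertSolGTS (A : Arch V n) (Φ : List (LTL V)) (s : ∀ i, Strategy A i)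
    (g : ∀ i, GTS A i) : Prop :=
  CertSolGTSWith A Φ s g (fun i => {j | j ≠ i})

/-- `(S,G)_R` is a solution of certifying synthesis with relevant processes for `Φ`. -/
def CertSolGTSR (A : Arch V n) (Φ : List (LTL V)) (s : ∀ i, Strategy A i)
    (g : ∀ i, GTS A i) : Prop :=
  CertSolGTSWith A Φ s g (fun i => Rel A Φ i)

/-- The copy of the strategy `s` whose labels are restricted to the guarantee
output variables `OGᵢ`. -/
def toGTS (A : Arch V n) {i : Fin n} (s : Strategy A i) : GTS A i where
  S := s.S
  finS := s.finS
  init := s.init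
  trans := s.trans
  label := fun t => s.label t ∩ A.Og i
  label_sub := fun _ => Set.inter_subset_right

/-- `s₁ ∥ … ∥ sₙ ⊨ Φ`. -/
def ParSat (A : Arch V n) (s : ∀ i, Strategy A i) (Φ : List (LTL V)) : Prop :=
  ∀ γ γ' : ℕ → Set V, (∀ k, γ k ⊆ A.Oenv) → (∀ k, γ' k ⊆ (A.Oenv ∪ A.out)ᶜ) →
    satSpec Φ (fun k => (par A s).comp γ k ∪ γ' k)

/-- A universal co-Büchi automaton over the alphabet `2^V`. -/
structure UCB (V : Type) where
  Q : Type
  finQ : Finite Q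
  init : Q
  δ : Q → Set V → Q → Prop
  F : Set Q

/-- The word `σ` is accepted by the universal co-Büchi automaton `Aut`:
every run of `σ` visits rejecting states only finitely often. -/
def UCB.accepts (Aut : UCB V) (σ : ℕ → Set V) : Prop :=
  ∀ r : ℕ → Aut.Q, r 0 = Aut.init → (∀ k, Aut.δ (r k) (σ k) (r (k + 1))) →
    {k | r k ∈ Aut.F}.Finite

/-- Every (finite or infinite) run of `Aut` induced by the possibly finite word `w`
contains only finitely many visits to rejecting states. -/
def UCB.RunsOk (Aut : UCB V) (w : ℕ → Option (Set V)) : Prop :=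
  ∀ r : ℕ → Aut.Q, r 0 = Aut.init →
    (∀ k a, w k = some a → Aut.δ (r k) a (r (k + 1))) →
    {k | r k ∈ Aut.F ∧ ∀ l < k, (w l).isSome}.Finite

/-- `s` is a local strategy for process `i` w.r.t. the GTSs `{g j | j ∈ J}`:
its computation on `γ` is infinite iff some valuation `γ'` of the remaining
variables makes all prefixes of `comp(s,γ) ∪ γ'` valid histories. -/
def IsLocalStrategy (A : Arch V n) {i : Fin n} (g : ∀ j, GTS A j) (J : Set (Fin n))
    (s : LocalStrategy A i) : Prop :=
  ∀ γ : ℕ → Set V, (∀ k, γ k ⊆ A.I i) →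
    (s.Inf γ ↔ ∃ γ' : ℕ → Set V, (∀ k, γ' k ⊆ (A.Vars i)ᶜ) ∧
      ∀ t, ValidHist A g J t (fun k => s.compD γ k ∪ γ' k))

/-- `(S,G)` is a solution of certifying synthesis with local strategies for `Φ`:
for every system process `i`, `sᵢ ≼_{OGᵢ} gᵢ` and, for every universal co-Büchi
automaton with `L(Aᵢ) = L(φᵢ)`, all runs induced by `comp(sᵢ,γ) ∪ γ'` contain only
finitely many visits to rejecting states. -/
def CertSolLocal (A : Arch V n) (Φ : List (LTL V)) (s : ∀ i, LocalStrategy A i)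
    (g : ∀ i, GTS A i) : Prop :=
  ∀ i, PSim (s i) (g i) ∧
    ∀ Aut : UCB V, (∀ σ : ℕ → Set V, Aut.accepts σ ↔ satDecomp A Φ i σ) →
      ∀ γ γ' : ℕ → Set V, (∀ k, γ k ⊆ A.I i) → (∀ k, γ' k ⊆ (A.Vars i)ᶜ) →
        Aut.RunsOk ((s i).pcomp γ γ')

/-- `s'` is the extension of the local strategy `s` w.r.t. `G`: it behaves like `s`
on inputs with infinite computation and like the own guarantee `gᵢ` (joined with some
valuation of the non-guarantee outputs) otherwise. -/
def IsExtension (A : Arch V n) {i : Fin n} (s : LocalStrategy A i) (gi : GTS A i)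
    (s' : Strategy A i) : Prop :=
  ∀ γ : ℕ → Set V, (∀ k, γ k ⊆ A.I i) →
    (s.Inf γ → ∀ k, s'.comp γ k = s.compD γ k) ∧
    (¬ s.Inf γ → ∃ σ' : ℕ → Set V, (∀ k, σ' k ⊆ A.O i \ A.Og i) ∧
      ∀ k, s'.comp γ k = gi.comp γ k ∪ σ' k)

/-- `s'` is the restriction of the complete strategy `s` to a local strategy w.r.t.
the GTSs `{g j | j ∈ J}`: a copy of `s` whose computation on `γ` is infinite iff some
valuation `γ'` of the remaining variables makes all prefixes of `comp(s,γ) ∪ γ'`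
valid histories. -/
def IsRestriction (A : Arch V n) {i : Fin n} (g : ∀ j, GTS A j) (J : Set (Fin n))
    (s : Strategy A i) (s' : LocalStrategy A i) : Prop :=
  ∀ γ : ℕ → Set V, (∀ k, γ k ⊆ A.I i) →
    (∀ k, (s'.prun γ k).isSome → s'.compD γ k = s.comp γ k) ∧
    (s'.Inf γ ↔ ∃ γ' : ℕ → Set V, (∀ k, γ' k ⊆ (A.Vars i)ᶜ) ∧
      ∀ t, ValidHist A g J t (cword A s γ γ'))

/-- `s₁ ∥ … ∥ sₙ ⊨ Φ` for local strategies: all computations of the parallel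
composition are infinite and satisfy `Φ`. -/
def PParSat (A : Arch V n) (s : ∀ i, LocalStrategy A i) (Φ : List (LTL V)) : Prop :=
  ∀ γ γ' : ℕ → Set V, (∀ k, γ k ⊆ A.Oenv) → (∀ k, γ' k ⊆ (A.Oenv ∪ A.out)ᶜ) →
    (pPar A s).Inf γ ∧ satSpec Φ (fun k => (pPar A s).compD γ k ∪ γ' k)

end Defs

section Aux

variable {V : Type} {n : ℕ}

/-- LTL satisfaction only depends on the values of the atomic propositions
occurring in the formula. -/
lemma sat_agree (P : Set V) (ξ : LTL V) (hξ : ξ.props ⊆ P) :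
    ∀ σ σ' : ℕ → Set V, (∀ k, σ k ∩ P = σ' k ∩ P) → (LTL.sat σ ξ ↔ LTL.sat σ' ξ) := by
  induction ξ with
  | atom a =>
    intro σ σ' h
    have haP : a ∈ P := hξ (Set.mem_singleton a)
    have h0 := h 0
    simp only [LTL.sat]
    constructor
    · intro ha
      have : a ∈ σ' 0 ∩ P := h0 ▸ ⟨ha, haP⟩
      exact this.1
    · intro ha
      have : a ∈ σ 0 ∩ P := h0.symm ▸ ⟨ha, haP⟩
      exact this.1
  | neg φ ih =>
    intro σ σ' h
    simp only [LTL.sat]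
    exact not_congr (ih hξ σ σ' h)
  | disj φ ψ ihφ ihψ =>
    intro σ σ' h
    simp only [LTL.sat]
    exact or_congr (ihφ (fun v hv => hξ (Or.inl hv)) σ σ' h)
      (ihψ (fun v hv => hξ (Or.inr hv)) σ σ' h)
  | conj φ ψ ihφ ihψ =>
    intro σ σ' h
    simp only [LTL.sat]
    exact and_congr (ihφ (fun v hv => hξ (Or.inl hv)) σ σ' h)
      (ihψ (fun v hv => hξ (Or.inr hv)) σ σ' h)
  | next φ ih =>
    intro σ σ' h
    simp only [LTL.sat]
    exact ih hξ _ _ (fun k => h (k + 1))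
  | untl φ ψ ihφ ihψ =>
    intro σ σ' h
    simp only [LTL.sat]
    constructor
    · rintro ⟨t, h1, h2⟩
      exact ⟨t, (ihψ (fun v hv => hξ (Or.inr hv)) _ _ (fun k => h (k + t))).mp h1,
        fun u hu => (ihφ (fun v hv => hξ (Or.inl hv)) _ _ (fun k => h (k + u))).mp (h2 u hu)⟩
    · rintro ⟨t, h1, h2⟩
      exact ⟨t, (ihψ (fun v hv => hξ (Or.inr hv)) _ _ (fun k => h (k + t))).mpr h1,
        fun u hu => (ihφ (fun v hv => hξ (Or.inl hv)) _ _ (fun k => h (k + u))).mpr (h2 u hu)⟩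

lemma satDecomp_agree (A : Arch V n) (Φ : List (LTL V)) (i : Fin n) (σ σ' : ℕ → Set V)
    (h : ∀ k, σ k ∩ A.Vars i = σ' k ∩ A.Vars i)
    (hpr : propsDecomp A Φ i ⊆ A.Vars i) :
    satDecomp A Φ i σ → satDecomp A Φ i σ' := by
  intro hs ξ hξ
  have hsub : ξ.props ⊆ A.Vars i := fun v hv => hpr ⟨ξ, hξ, hv⟩
  exact (sat_agree _ ξ hsub σ σ' h).mp (hs ξ hξ)

/-- The partial run only depends on the inputs read so far. -/
lemma prun_congr {I O : Set V} (m : PMoore V I O) (γ γ' : ℕ → Set V)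
    (k : ℕ) (h : ∀ l < k, γ l = γ' l) : m.prun γ k = m.prun γ' k := by
  induction k with
  | zero => rfl
  | succ k ih =>
    simp only [PMoore.prun]
    rw [ih (fun l hl => h l (Nat.lt_succ_of_lt hl)), h k (Nat.lt_succ_self k)]

/-- The run only depends on the inputs read so far. -/
lemma run_congr {I O : Set V} (m : Moore V I O) (γ γ' : ℕ → Set V)
    (k : ℕ) (h : ∀ l < k, γ l = γ' l) : m.run γ k = m.run γ' k := by
  induction k with
  | zero => rfl
  | succ k ih =>
    simp only [Moore.run]
    rw [ih (fun l hl => h l (Nat.lt_succ_of_lt hl)), h k (Nat.lt_succ_self k)]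

/-- Once the partial run is undefined it stays undefined. -/
lemma prun_none {I O : Set V} (m : PMoore V I O) (γ : ℕ → Set V) {k l : ℕ}
    (h : m.prun γ k = none) (hkl : k ≤ l) : m.prun γ l = none := by
  induction l with
  | zero => exact (Nat.le_zero.mp hkl) ▸ h
  | succ l ih =>
    rcases Nat.lt_or_ge k (l + 1) with hlt | hge
    · have := ih (Nat.lt_succ_iff.mp hlt)
      simp only [PMoore.prun, this, Option.bind_none]
    · have : k = l + 1 := le_antisymm hkl hge
      exact this ▸ h

end Aux

/-- **Restriction of complete solutions to local-strategy solutions.** If `(S,G)` is a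
solution of certifying synthesis with local satisfaction for `φ` and
`prop(φᵢ) ⊆ Vᵢ` holds for all system processes, then `(S',G)` is a solution of
certifying synthesis with local strategies for `φ`, where `s'ᵢ` is the restriction of
`sᵢ` w.r.t. `G`. -/
theorem complete_solution_restricts_to_local_solution
    {V : Type} [Finite V] {n : ℕ} (A : Arch V n) (Φ : List (LTL V))
    (s : ∀ i, Strategy A i) (g : ∀ i, GTS A i)
    (hsol : CertSolGTS A Φ s g)
    (hprops : ∀ i, propsDecomp A Φ i ⊆ A.Vars i)
    (s' : ∀ i, LocalStrategy A i)
    (hres : ∀ i, IsRestriction A g {j | j ≠ i} (s i) (s' i)) :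
    CertSolLocal A Φ s' g := by
  intro i
  obtain ⟨hsim, hlocal⟩ := hsol i
  obtain ⟨R₀, hR₀init, hR₀lab, hR₀trans⟩ := hsim
  have hrunR : ∀ γ : ℕ → Set V, ∀ k, R₀ ((s i).run γ k) ((g i).run γ k) := by
    intro γ k
    induction k with
    | zero => exact hR₀init
    | succ k ih => exact hR₀trans _ _ _ Set.inter_subset_right ih
  constructor
  · -- PSim (s' i) (g i)
    refine ⟨fun t₂ t₁ => ∃ γ : ℕ → Set V, (∀ k, γ k ⊆ A.I i) ∧ ∃ k,
      (s' i).prun γ k = some t₂ ∧ (g i).run γ k = t₁, ?_, ?_, ?_⟩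
    · exact ⟨fun _ => ∅, fun _ => Set.empty_subset _, 0, rfl, rfl⟩
    · rintro t₂ t₁ ⟨γ, hγ, k, hp, hr⟩
      have hcomp := ((hres i) γ hγ).1 k (by rw [hp]; rfl)
      have h1 : (s' i).compD γ k = (γ k ∩ A.I i) ∪ (s' i).label t₂ := by
        unfold PMoore.compD; rw [hp]
      have hcomp' : (γ k ∩ A.I i) ∪ (s' i).label t₂ =
          (γ k ∩ A.I i) ∪ (s i).label ((s i).run γ k) := by
        rw [← h1, hcomp]; rfl
      have hlab : (s' i).label t₂ = (s i).label ((s i).run γ k) := by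
        ext v
        constructor
        · intro hv
          have hvO : v ∈ A.O i := (s' i).label_sub t₂ hv
          have : v ∈ (γ k ∩ A.I i) ∪ (s i).label ((s i).run γ k) :=
            hcomp' ▸ (Or.inr hv)
          rcases this with hI | h
          · exact absurd hvO (Set.disjoint_left.mp (A.disj_IO i) hI.2)
          · exact h
        · intro hv
          have hvO : v ∈ A.O i := (s i).label_sub _ hv
          have : v ∈ (γ k ∩ A.I i) ∪ (s' i).label t₂ :=
            hcomp'.symm ▸ (Or.inr hv)
          rcases this with hI | h
          · exact absurd hvO (Set.disjoint_left.mp (A.disj_IO i) hI.2)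
          · exact h
      rw [hlab, hR₀lab _ _ (hrunR γ k), hr]
    · rintro t₂ t₁ a ha ⟨γ, hγ, k, hp, hr⟩ t₂' ht
      refine ⟨fun l => if l < k then γ l else a, ?_, k + 1, ?_, ?_⟩
      · intro l
        by_cases hl : l < k
        · simp only [hl, if_pos]; exact hγ l
        · simp only [hl, if_neg, if_false]; exact ha
      · have hpref : (s' i).prun (fun l => if l < k then γ l else a) k =
            (s' i).prun γ k := by
          apply prun_congr
          intro l hl; simp [hl]
        simp only [PMoore.prun, hpref, hp, Option.bind_some]
        have hk : ¬ k < k := lt_irrefl k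
        simp only [hk, if_neg, if_false]
        rw [Set.inter_eq_left.mpr ha]
        exact ht
      · have hpref : (g i).run (fun l => if l < k then γ l else a) k =
            (g i).run γ k := by
          apply run_congr
          intro l hl; simp [hl]
        simp only [Moore.run, hpref, hr]
        have hk : ¬ k < k := lt_irrefl k
        simp only [hk, if_neg, if_false]
        rw [Set.inter_eq_left.mpr ha]
  · -- runs of the UCB
    intro Aut hAut γ γ' hγ hγ'
    by_cases hInf : (s' i).Inf γ
    · obtain ⟨γ'', hγ'', hvalid⟩ := (((hres i) γ hγ).2).mp hInf
      have hsat'' : satDecomp A Φ i (cword A (s i) γ γ'') := hlocal γ γ'' hγ hγ'' hvalid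
      have hagree : ∀ k, cword A (s i) γ γ'' k ∩ A.Vars i =
          cword A (s i) γ γ' k ∩ A.Vars i := by
        intro k
        ext v
        simp only [cword, Set.mem_inter_iff, Set.mem_union]
        constructor
        · rintro ⟨hv | hv, hV⟩
          · exact ⟨Or.inl hv, hV⟩
          · exact absurd hV (hγ'' k hv)
        · rintro ⟨hv | hv, hV⟩
          · exact ⟨Or.inl hv, hV⟩
          · exact absurd hV (hγ' k hv)
      have hsat : satDecomp A Φ i (cword A (s i) γ γ') :=
        satDecomp_agree A Φ i _ _ hagree (hprops i) hsat''
      intro r hr0 hrstep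
      have hword : ∀ k, (s' i).pcomp γ γ' k = some (cword A (s i) γ γ' k) := by
        intro k
        obtain ⟨st, hst⟩ := Option.isSome_iff_exists.mp (hInf k)
        have hcomp := ((hres i) γ hγ).1 k (by rw [hst]; rfl)
        have h1 : (s' i).compD γ k = (γ k ∩ A.I i) ∪ (s' i).label st := by
          unfold PMoore.compD; rw [hst]
        simp only [PMoore.pcomp, hst, Option.map_some]
        congr 1
        show (γ k ∩ A.I i) ∪ (s' i).label st ∪ γ' k = cword A (s i) γ γ' k
        rw [show (γ k ∩ A.I i) ∪ (s' i).label st = (s' i).compD γ k from h1.symm, hcomp]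
        rfl
      have hacc : Aut.accepts (cword A (s i) γ γ') := (hAut _).mpr hsat
      have hfin := hacc r hr0 (fun k => hrstep k _ (hword k))
      exact hfin.subset (fun k hk => hk.1)
    · obtain ⟨t₀, ht₀⟩ : ∃ t, (s' i).prun γ t = none := by
        by_contra h
        push_neg at h
        exact hInf fun k => Option.isSome_iff_ne_none.mpr (h k)
      intro r _ _
      apply Set.Finite.subset (Set.finite_Iic t₀)
      intro k hk
      by_contra hkt
      have hlt : t₀ < k := lt_of_not_ge hkt
      have := hk.2 t₀ hlt
      simp [PMoore.pcomp, ht₀] at this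

end CertSynth
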